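/- For every iteration k ≥ 1 and every follower j ∈ F, the smoothed bootstrap-percolation value strictly under-approximates the exact one: \bar π_j(k) < π_j(k). -/
import Mathlib


open scoped BigOperators

/-- The parametrized sigmoid function σ_{s,q}(y) = (1+q)/(1 + q⁻¹ e^{-s y}) − q. -/
noncomputable def sigmaFn (s q y : ℝ) : ℝ :=
  (1 + q) / (1 + q⁻¹ * Real.exp (-(s * y))) - q

/-- Smoothed adjacency entry: `σ_{s_A,q_A}((R² − Δ_{ij}²)³)` if `i ≠ j` and `Δ_{ij} < R`,
and `0` otherwise. -/
noncomputable def barAdj (sA qA R : ℝ) {n m : ℕ} (p : Fin n → EuclideanSpace ℝ (Fin m))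
    (i j : Fin n) : ℝ :=
  if i ≠ j ∧ dist (p i) (p j) < R then
    sigmaFn sA qA ((R ^ 2 - dist (p i) (p j) ^ 2) ^ 3)
  else 0

/-- Exact bootstrap-percolation values: leaders `j < l` start at `1`, followers start at `0`;
`π_j(k+1) = 1` iff `π_j(k) = 1` or the sum of `π_i(k)` over neighbors `i` of `j` is `≥ r`. -/
noncomputable def piExact (R : ℝ) {n m : ℕ} (p : Fin n → EuclideanSpace ℝ (Fin m))
    (l r : ℕ) : ℕ → Fin n → ℝ
  | 0 => fun j => if (j : ℕ) < l then 1 else 0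
  | k + 1 => fun j =>
      if piExact R p l r k j = 1 ∨
          (r : ℝ) ≤ ∑ i ∈ Finset.univ.filter (fun i => i ≠ j ∧ dist (p i) (p j) < R),
            piExact R p l r k i
      then 1 else 0

/-- Smoothed bootstrap-percolation values: leaders `j < l` are pinned at `1`; each follower
`j` updates via `σ_{s,q}(∑_i \bar a_{ij} ⋅ \bar π_i(k) − r)` (leaders contributing
`\bar a_{ij} ⋅ 1`). -/
noncomputable def piBar (s q sA qA R : ℝ) {n m : ℕ} (p : Fin n → EuclideanSpace ℝ (Fin m))
    (l r : ℕ) : ℕ → Fin n → ℝ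
  | 0 => fun j => if (j : ℕ) < l then 1 else 0
  | k + 1 => fun j =>
      if (j : ℕ) < l then 1
      else sigmaFn s q ((∑ i, barAdj sA qA R p i j * piBar s q sA qA R p l r k i) - r)

lemma sig_denom_pos {q e : ℝ} (hq : 0 < q) (he : 0 < e) : 0 < 1 + q⁻¹ * e := by
  have := mul_pos (inv_pos.mpr hq) he; linarith

lemma sig_lt_one {s q y : ℝ} (hq : 0 < q) : sigmaFn s q y < 1 := by
  unfold sigmaFn
  have he := Real.exp_pos (-(s * y))
  have hD : 0 < 1 + q⁻¹ * Real.exp (-(s * y)) := sig_denom_pos hq he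
  have h1 : (1 + q) / (1 + q⁻¹ * Real.exp (-(s * y))) < 1 + q := by
    rw [div_lt_iff₀ hD]
    nlinarith [mul_pos (inv_pos.mpr hq) he]
  linarith

lemma sig_neg {s q y : ℝ} (hs : 0 < s) (hq : 0 < q) (hy : y < 0) : sigmaFn s q y < 0 := by
  unfold sigmaFn
  have he : 1 < Real.exp (-(s * y)) := by
    rw [Real.one_lt_exp_iff]; nlinarith
  have hD : 0 < 1 + q⁻¹ * Real.exp (-(s * y)) := sig_denom_pos hq (by linarith)
  have h1 : (1 + q) / (1 + q⁻¹ * Real.exp (-(s * y))) < q := by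
    rw [div_lt_iff₀ hD]
    have : q * (q⁻¹ * Real.exp (-(s * y))) = Real.exp (-(s * y)) := by field_simp
    nlinarith
  linarith

lemma sig_pos {s q y : ℝ} (hs : 0 < s) (hq : 0 < q) (hy : 0 < y) : 0 < sigmaFn s q y := by
  unfold sigmaFn
  have he : Real.exp (-(s * y)) < 1 := by
    rw [Real.exp_lt_one_iff]; nlinarith
  have he' := Real.exp_pos (-(s * y))
  have hD : 0 < 1 + q⁻¹ * Real.exp (-(s * y)) := sig_denom_pos hq he'
  have h1 : q < (1 + q) / (1 + q⁻¹ * Real.exp (-(s * y))) := by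
    rw [lt_div_iff₀ hD]
    have : q * (q⁻¹ * Real.exp (-(s * y))) = Real.exp (-(s * y)) := by field_simp
    nlinarith
  linarith

lemma piExact_mem {n m : ℕ} (R : ℝ) (p : Fin n → EuclideanSpace ℝ (Fin m)) (l r : ℕ)
    (k : ℕ) (j : Fin n) : piExact R p l r k j = 0 ∨ piExact R p l r k j = 1 := by
  cases k with
  | zero => simp only [piExact]; split <;> simp
  | succ k => simp only [piExact]; split <;> simp

lemma piExact_nonneg {n m : ℕ} (R : ℝ) (p : Fin n → EuclideanSpace ℝ (Fin m)) (l r : ℕ)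
    (k : ℕ) (j : Fin n) : 0 ≤ piExact R p l r k j := by
  rcases piExact_mem R p l r k j with h | h <;> rw [h] <;> norm_num

lemma piExact_leader {n m : ℕ} (R : ℝ) (p : Fin n → EuclideanSpace ℝ (Fin m)) (l r : ℕ)
    (k : ℕ) (j : Fin n) (hj : (j : ℕ) < l) : piExact R p l r k j = 1 := by
  induction k with
  | zero => simp [piExact, hj]
  | succ k ih => simp [piExact, ih]

lemma sum_bound {n m : ℕ} (l r : ℕ) (s q sA qA R : ℝ) (hs : 0 < s) (hq0 : 0 < q)
    (hsA : 0 < sA) (hqA0 : 0 < qA)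
    (p : Fin n → EuclideanSpace ℝ (Fin m)) (k : ℕ) (j : Fin n)
    (hle : ∀ i : Fin n, piBar s q sA qA R p l r k i ≤ piExact R p l r k i) :
    (∑ i, barAdj sA qA R p i j * piBar s q sA qA R p l r k i) ≤
      ∑ i ∈ Finset.univ.filter (fun i => i ≠ j ∧ dist (p i) (p j) < R),
        piExact R p l r k i := by
  have hrw : (∑ i, barAdj sA qA R p i j * piBar s q sA qA R p l r k i) =
      ∑ i ∈ Finset.univ.filter (fun i => i ≠ j ∧ dist (p i) (p j) < R),
        barAdj sA qA R p i j * piBar s q sA qA R p l r k i := by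
    rw [Finset.sum_filter]
    refine Finset.sum_congr rfl fun i _ => ?_
    by_cases h : i ≠ j ∧ dist (p i) (p j) < R
    · simp [h]
    · simp [h, barAdj]
  rw [hrw]
  refine Finset.sum_le_sum fun i hi => ?_
  simp only [Finset.mem_filter] at hi
  have hy : 0 < (R ^ 2 - dist (p i) (p j) ^ 2) ^ 3 := by
    have hd : 0 ≤ dist (p i) (p j) := dist_nonneg
    have h2 : dist (p i) (p j) ^ 2 < R ^ 2 := by nlinarith [hi.2.2]
    exact pow_pos (by linarith) 3
  have ha : barAdj sA qA R p i j = sigmaFn sA qA ((R ^ 2 - dist (p i) (p j) ^ 2) ^ 3) := by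
    simp [barAdj, hi.2.1, hi.2.2]
  have h0 : 0 < sigmaFn sA qA ((R ^ 2 - dist (p i) (p j) ^ 2) ^ 3) := sig_pos hsA hqA0 hy
  have h1 : sigmaFn sA qA ((R ^ 2 - dist (p i) (p j) ^ 2) ^ 3) < 1 := sig_lt_one hqA0
  rw [ha]
  calc sigmaFn sA qA ((R ^ 2 - dist (p i) (p j) ^ 2) ^ 3) * piBar s q sA qA R p l r k i
      ≤ sigmaFn sA qA ((R ^ 2 - dist (p i) (p j) ^ 2) ^ 3) * piExact R p l r k i :=
        mul_le_mul_of_nonneg_left (hle i) h0.le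
    _ ≤ piExact R p l r k i := by
        nlinarith [piExact_nonneg R p l r k i]

lemma piBar_le {n m : ℕ} (l r : ℕ) (s q sA qA R : ℝ) (hs : 0 < s) (hq0 : 0 < q)
    (hsA : 0 < sA) (hqA0 : 0 < qA)
    (p : Fin n → EuclideanSpace ℝ (Fin m)) :
    ∀ k (j : Fin n), piBar s q sA qA R p l r k j ≤ piExact R p l r k j := by
  intro k
  induction k with
  | zero => intro j; simp [piBar, piExact]
  | succ k ih =>
    intro j
    by_cases hj : (j : ℕ) < l
    · rw [piExact_leader R p l r (k + 1) j hj]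
      simp [piBar, hj]
    · have hbar : piBar s q sA qA R p l r (k + 1) j =
          sigmaFn s q ((∑ i, barAdj sA qA R p i j * piBar s q sA qA R p l r k i) - r) := by
        simp [piBar, hj]
      rw [hbar]
      rcases piExact_mem R p l r (k + 1) j with h | h
      · rw [h]
        -- exact value is 0, so sum of exact neighbor values < r
        have hcond : ¬ (piExact R p l r k j = 1 ∨
            (r : ℝ) ≤ ∑ i ∈ Finset.univ.filter (fun i => i ≠ j ∧ dist (p i) (p j) < R),
              piExact R p l r k i) := by
          intro hc
          simp only [piExact, hc, if_true] at h
          norm_num at h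
        push_neg at hcond
        have hsum := sum_bound l r s q sA qA R hs hq0 hsA hqA0 p k j ih
        have : (∑ i, barAdj sA qA R p i j * piBar s q sA qA R p l r k i) - r < 0 := by
          have := hcond.2
          linarith
        exact (sig_neg hs hq0 this).le
      · rw [h]; exact (sig_lt_one hq0).le

theorem stmt_9 {n m : ℕ} (l r : ℕ) (hl : 0 < l) (hln : l ≤ n) (hr : 0 < r)
    (R s q sA qA : ℝ) (hR : 0 < R) (hs : 0 < s) (hq0 : 0 < q) (hq1 : q < 1)
    (hsA : 0 < sA) (hqA0 : 0 < qA) (hqA1 : qA < 1)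
    (p : Fin n → EuclideanSpace ℝ (Fin m)) :
    ∀ k : ℕ, 1 ≤ k → ∀ j : Fin n, l ≤ (j : ℕ) →
      piBar s q sA qA R p l r k j < piExact R p l r k j := by
  intro k hk j hj
  obtain ⟨k, rfl⟩ : ∃ k', k = k' + 1 := ⟨k - 1, by omega⟩
  have hjl : ¬ (j : ℕ) < l := by omega
  have hbar : piBar s q sA qA R p l r (k + 1) j =
      sigmaFn s q ((∑ i, barAdj sA qA R p i j * piBar s q sA qA R p l r k i) - r) := by
    simp [piBar, hjl]
  rw [hbar]
  rcases piExact_mem R p l r (k + 1) j with h | h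
  · rw [h]
    have hcond : ¬ (piExact R p l r k j = 1 ∨
        (r : ℝ) ≤ ∑ i ∈ Finset.univ.filter (fun i => i ≠ j ∧ dist (p i) (p j) < R),
          piExact R p l r k i) := by
      intro hc
      simp only [piExact, hc, if_true] at h
      norm_num at h
    push_neg at hcond
    have hsum := sum_bound l r s q sA qA R hs hq0 hsA hqA0 p k j
      (piBar_le l r s q sA qA R hs hq0 hsA hqA0 p k)
    have : (∑ i, barAdj sA qA R p i j * piBar s q sA qA R p l r k i) - r < 0 := by
      have := hcond.2; linarith
    exact sig_neg hs hq0 this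
  · rw [h]; exact sig_lt_one hq0
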